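/- arXiv:1401.0154 — 2 statements merged into one kernel-verified Lean document; each statement's English description precedes it below -/
import Mathlib

section
/- Let d ≥ 2 and let k ∈ ℝ^d satisfy cos k₁ = cos k₂ = ⋯ = cos k_d = c for some c ∈ (−1,1). Then, with φ(k) = arccos((1/d)Σ_j cos k_j): each partial derivative satisfies ∂φ/∂k_j (k) = sin k_j/(d sin φ(k)) ∈ {−1/d, +1/d}, so that ∇φ(k) is one of the 2^d vertices of the cube {−1/d, 1/d}^d inscribed in the sphere of radius 1/√d; and the Hessian matrix of φ at k is singular: det(Hess φ)(k) = 0. -/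
open Finset

/-- `φ(k) = arccos((1/d) ∑_j cos k_j)`, the arccosine of the Fourier symbol of the simple
random walk on `ℤ^d`. -/
noncomputable def rwPhase (d : ℕ) (k : Fin d → ℝ) : ℝ :=
  Real.arccos ((1 / (d : ℝ)) * ∑ j, Real.cos (k j))

/-- the Hessian matrix of a function on `ℝ^d`, with entries the iterated directional
derivatives along the standard basis vectors -/
noncomputable def hessian (d : ℕ) (f : (Fin d → ℝ) → ℝ) (k : Fin d → ℝ) :
    Matrix (Fin d) (Fin d) ℝ :=
  Matrix.of fun l m =>
    fderiv ℝ (fun k' => fderiv ℝ f k' (Pi.single m 1)) k (Pi.single l 1)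

open Real Matrix Topology

/-!
Where `|cosMean| < 1`, the gradient of `φ = arccos ∘ cosMean` is `g_j = sin k_j / (d sin φ)`, and
differentiating once more gives `sin φ · Hess φ = diag(cos k_j / d) - cos φ · g gᵀ`. If every
`cos k_j = c`, then `cos φ = c` and `sin² k_j = sin² φ`, so `g_j = ±1/d` and `|g|² = 1/d`;
hence `sin φ · Hess φ · g = c (g/d - |g|² g) = 0`: the gradient is a kernel vector of the Hessian.
-/

noncomputable def cosMean (d : ℕ) (k : Fin d → ℝ) : ℝ := (1 / (d : ℝ)) * ∑ j, cos (k j)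

noncomputable def rwPhaseGrad (d : ℕ) (k : Fin d → ℝ) : Fin d → ℝ :=
  fun j => sin (k j) / (d * sin (rwPhase d k))

section

variable {d : ℕ}

lemma rwPhase_apply (k : Fin d → ℝ) : rwPhase d k = arccos (cosMean d k) := rfl

lemma cosMean_of_forall_cos_eq (hd : d ≠ 0) {k : Fin d → ℝ} {c : ℝ}
    (hk : ∀ j, cos (k j) = c) : cosMean d k = c := by
  simp only [cosMean, hk, sum_const, card_univ, Fintype.card_fin, nsmul_eq_mul]
  field_simp

lemma continuous_cosMean : Continuous (cosMean d) := by
  unfold cosMean; fun_prop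

lemma differentiable_cosMean : Differentiable ℝ (cosMean d) := by
  unfold cosMean; fun_prop

lemma fderiv_cosMean_single (k : Fin d → ℝ) (m : Fin d) :
    fderiv ℝ (cosMean d) k (Pi.single m 1) = -sin (k m) / d := by
  have hsum : HasFDerivAt (fun k' : Fin d → ℝ => ∑ j, cos (k' j))
      (∑ j, -sin (k j) • ContinuousLinearMap.proj j) k :=
    HasFDerivAt.fun_sum fun j _ => (hasFDerivAt_apply j k).cos
  have hmean : HasFDerivAt (cosMean d) _ k := hsum.const_mul (1 / (d : ℝ))
  rw [hmean.fderiv]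
  simp [Pi.single_apply, div_eq_inv_mul]

lemma sin_rwPhase_pos {k : Fin d → ℝ} (hk : |cosMean d k| < 1) : 0 < sin (rwPhase d k) := by
  rw [rwPhase_apply, sin_arccos, sqrt_pos, sub_pos, sq_lt_one_iff_abs_lt_one]
  exact hk

lemma hasFDerivAt_rwPhase {k : Fin d → ℝ} (hk : |cosMean d k| < 1) :
    HasFDerivAt (rwPhase d) (-(sin (rwPhase d k))⁻¹ • fderiv ℝ (cosMean d) k) k := by
  obtain ⟨hk₁, hk₂⟩ := abs_lt.mp hk
  have h := (hasDerivAt_arccos hk₁.ne' hk₂.ne).comp_hasFDerivAt k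
    (differentiable_cosMean k).hasFDerivAt
  rwa [one_div, ← sin_arccos] at h

lemma fderiv_rwPhase_single {k : Fin d → ℝ} (hk : |cosMean d k| < 1) (m : Fin d) :
    fderiv ℝ (rwPhase d) k (Pi.single m 1) = rwPhaseGrad d k m := by
  rw [(hasFDerivAt_rwPhase hk).fderiv, _root_.smul_apply, fderiv_cosMean_single,
    rwPhaseGrad, smul_eq_mul]
  ring

lemma fderiv_rwPhase_single_eventuallyEq {k : Fin d → ℝ} (hk : |cosMean d k| < 1) (m : Fin d) :
    (fun k' => fderiv ℝ (rwPhase d) k' (Pi.single m 1)) =ᶠ[𝓝 k]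
      fun k' => rwPhaseGrad d k' m := by
  have hopen : IsOpen {k' : Fin d → ℝ | |cosMean d k'| < 1} :=
    isOpen_lt (continuous_abs.comp continuous_cosMean) continuous_const
  filter_upwards [hopen.mem_nhds hk] with k' hk'
  exact fderiv_rwPhase_single hk' m

lemma fderiv_rwPhaseGrad_single {k : Fin d → ℝ} (hk : |cosMean d k| < 1) (l m : Fin d) :
    fderiv ℝ (fun k' => rwPhaseGrad d k' m) k (Pi.single l 1) =
      (sin (rwPhase d k))⁻¹ * ((if l = m then cos (k m) / d else 0) -
        cos (rwPhase d k) * rwPhaseGrad d k l * rwPhaseGrad d k m) := by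
  have hd : (d : ℝ) ≠ 0 := Nat.cast_ne_zero.mpr m.pos.ne'
  have hs : sin (rwPhase d k) ≠ 0 := (sin_rwPhase_pos hk).ne'
  have hden := ((hasFDerivAt_rwPhase hk).sin).const_mul (d : ℝ)
  have hinv := (hasDerivAt_inv (mul_ne_zero hd hs)).comp_hasFDerivAt k hden
  have hgrad : (fun k' => rwPhaseGrad d k' m) =
      fun k' => sin (k' m) * (d * sin (rwPhase d k'))⁻¹ := by
    funext k'; rw [rwPhaseGrad, div_eq_mul_inv]
  have hprod : HasFDerivAt (fun k' => sin (k' m) * (d * sin (rwPhase d k'))⁻¹) _ k :=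
    (hasFDerivAt_apply m k).sin.mul hinv
  rw [hgrad, hprod.fderiv]
  simp only [_root_.add_apply, _root_.smul_apply, smul_eq_mul, ContinuousLinearMap.proj_apply,
    fderiv_cosMean_single, Pi.single_apply, rwPhaseGrad]
  rcases eq_or_ne l m with rfl | hlm
  · simp only [if_true]
    field_simp
    ring
  · simp only [hlm, hlm.symm, if_false]
    field_simp
    ring

lemma hessian_rwPhase {k : Fin d → ℝ} (hk : |cosMean d k| < 1) :
    hessian d (rwPhase d) k = (sin (rwPhase d k))⁻¹ •
      (diagonal (fun j => cos (k j) / d) -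
        cos (rwPhase d k) • vecMulVec (rwPhaseGrad d k) (rwPhaseGrad d k)) := by
  ext l m
  rw [hessian, of_apply, (fderiv_rwPhase_single_eventuallyEq hk m).fderiv_eq,
    fderiv_rwPhaseGrad_single hk]
  rcases eq_or_ne l m with rfl | hlm <;> simp [vecMulVec_apply, mul_assoc, *]

section ConstantCos

variable {k : Fin d → ℝ} {c : ℝ}

lemma cos_rwPhase_of_forall_cos_eq (hd : d ≠ 0) (hc : |c| < 1) (hk : ∀ j, cos (k j) = c) :
    cos (rwPhase d k) = c := by
  rw [rwPhase_apply, cosMean_of_forall_cos_eq hd hk,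
    cos_arccos (abs_le.mp hc.le).1 (abs_le.mp hc.le).2]

lemma rwPhaseGrad_eq_or_of_forall_cos_eq (hc : |c| < 1) (hk : ∀ j, cos (k j) = c)
    (j : Fin d) :
    rwPhaseGrad d k j = 1 / d ∨ rwPhaseGrad d k j = -(1 / d) := by
  have hd : d ≠ 0 := j.pos.ne'
  have hd' : (d : ℝ) ≠ 0 := Nat.cast_ne_zero.mpr hd
  have hsinφ : sin (rwPhase d k) ≠ 0 :=
    (sin_rwPhase_pos (cosMean_of_forall_cos_eq hd hk ▸ hc)).ne'
  have hsq : sin (k j) ^ 2 = sin (rwPhase d k) ^ 2 := by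
    rw [sin_sq, sin_sq, hk j, cos_rwPhase_of_forall_cos_eq hd hc hk]
  rcases sq_eq_sq_iff_eq_or_eq_neg.mp hsq with h | h
  · left
    rw [rwPhaseGrad, h]
    field_simp
  · right
    rw [rwPhaseGrad, h]
    field_simp

lemma rwPhaseGrad_ne_zero_of_forall_cos_eq (hd : d ≠ 0) (hc : |c| < 1)
    (hk : ∀ j, cos (k j) = c) : rwPhaseGrad d k ≠ 0 := by
  intro h
  have hj := rwPhaseGrad_eq_or_of_forall_cos_eq hc hk ⟨0, Nat.pos_of_ne_zero hd⟩
  simp [h, eq_comm, hd] at hj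

lemma hessian_rwPhase_mulVec_rwPhaseGrad (hd : d ≠ 0) (hc : |c| < 1) (hk : ∀ j, cos (k j) = c) :
    hessian d (rwPhase d) k *ᵥ rwPhaseGrad d k = 0 := by
  have hgrad_sq (j : Fin d) : rwPhaseGrad d k j * rwPhaseGrad d k j = 1 / d ^ 2 := by
    rcases rwPhaseGrad_eq_or_of_forall_cos_eq hc hk j with h | h <;> rw [h] <;> ring
  have hnorm : rwPhaseGrad d k ⬝ᵥ rwPhaseGrad d k = 1 / d := by
    have hd' : (d : ℝ) ≠ 0 := Nat.cast_ne_zero.mpr hd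
    simp only [dotProduct, hgrad_sq, sum_const, card_univ, Fintype.card_fin, nsmul_eq_mul]
    field_simp
  ext l
  rw [hessian_rwPhase (cosMean_of_forall_cos_eq hd hk ▸ hc)]
  simp only [smul_mulVec, sub_mulVec, mulVec_diagonal, vecMulVec_mulVec, hnorm, Pi.smul_apply,
    Pi.sub_apply, smul_eq_mul, hk, cos_rwPhase_of_forall_cos_eq hd hc hk, Pi.zero_apply,
    op_smul_eq_mul]
  ring

lemma det_hessian_rwPhase_eq_zero (hd : d ≠ 0) (hc : |c| < 1) (hk : ∀ j, cos (k j) = c) :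
    (hessian d (rwPhase d) k).det = 0 :=
  exists_mulVec_eq_zero_iff.mp ⟨rwPhaseGrad d k, rwPhaseGrad_ne_zero_of_forall_cos_eq hd hc hk,
    hessian_rwPhase_mulVec_rwPhaseGrad hd hc hk⟩

end ConstantCos

end

/-- If `cos k₁ = ⋯ = cos k_d = c ∈ (−1,1)` (`d ≥ 2`), then every partial
derivative of `φ` equals `sin k_j/(d sin φ(k)) ∈ {−1/d, +1/d}` — so `∇φ(k)` is a vertex of the
cube `{−1/d, 1/d}^d` inscribed in the sphere of radius `1/√d` — and the Hessian of `φ` at `k`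
is singular: `det Hess φ (k) = 0`. -/
theorem rwPhase_singular_points (d : ℕ) (hd : 2 ≤ d) (k : Fin d → ℝ) (c : ℝ)
    (hc1 : -1 < c) (hc2 : c < 1) (hk : ∀ j, Real.cos (k j) = c) :
    (∀ j, fderiv ℝ (rwPhase d) k (Pi.single j 1)
        = Real.sin (k j) / (d * Real.sin (rwPhase d k)) ∧
      (fderiv ℝ (rwPhase d) k (Pi.single j 1) = 1 / d ∨
        fderiv ℝ (rwPhase d) k (Pi.single j 1) = -(1 / d))) ∧
    (hessian d (rwPhase d) k).det = 0 := by
  have hd₀ : d ≠ 0 := by omega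
  have hc : |c| < 1 := abs_lt.mpr ⟨hc1, hc2⟩
  refine ⟨fun j => ?_, det_hessian_rwPhase_eq_zero hd₀ hc hk⟩
  rw [fderiv_rwPhase_single (cosMean_of_forall_cos_eq hd₀ hk ▸ hc) j]
  exact ⟨rfl, rwPhaseGrad_eq_or_of_forall_cos_eq hc hk j⟩
end

section
/- Let k, l ∈ ℝ with cos k ≠ cos l, and let φ = φ(k,l) = arccos( (cos k + cos l)/2 ) (so |cos φ| < 1 and sin φ > 0). Set x = sin k / (2 sin φ) and y = sin l / (2 sin φ). Then x² + y² < 1/2, and the determinant of the 2×2 Hessian matrix of φ(k,l) satisfies det(Hess φ)(k,l) = −(1/4)(1 − (x+y)²)(1 − (x−y)²) = −(1/4)(x+y−1)(x+y+1)(x−y+1)(x−y−1); in particular det(Hess φ)(k,l) < 0. (This identity yields the limit density ρ₂(x,y) = 2·1_{{x²+y²≤1/2}} / (π² (x+y−1)(x+y+1)(x−y+1)(x−y−1)) of the Grover walk on ℤ².) -/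
/-- `φ(k,l) = arccos((cos k + cos l)/2)` for the simple random walk on `ℤ²`. -/
noncomputable def rwPhase2 (p : ℝ × ℝ) : ℝ :=
  Real.arccos ((Real.cos p.1 + Real.cos p.2) / 2)

/-- the standard basis of `ℝ × ℝ` -/
def basis2 : Fin 2 → ℝ × ℝ := ![(1, 0), (0, 1)]

/-- the Hessian matrix of a function on `ℝ × ℝ` -/
noncomputable def hessian2 (f : ℝ × ℝ → ℝ) (p : ℝ × ℝ) : Matrix (Fin 2) (Fin 2) ℝ :=
  Matrix.of fun a b =>
    fderiv ℝ (fun q => fderiv ℝ f q (basis2 b)) p (basis2 a)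

/-! With `u = cos φ = (cos k + cos l)/2` and `w = sin φ`, the gradient of `φ` is
`(sin k, sin l)/(2w)`, and differentiating once more gives
`Hess φ = diag(cos k, cos l)/(2w) - u/(4w³) · (sin k, sin l)(sin k, sin l)ᵀ`.
After substituting `sin² = 1 - cos²` and `w² = 1 - u²`, its determinant collapses to
`-(cos k - cos l)²/(16w⁴)`, while `(1 - (x+y)²)(1 - (x-y)²) = (cos k - cos l)²/(4w⁴)` and
`x² + y² = 1/2 - (cos k - cos l)²/(8w²)`. -/

open Real Filter Topology

noncomputable def dual2 (a b : ℝ) : ℝ × ℝ →L[ℝ] ℝ :=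
  a • ContinuousLinearMap.fst ℝ ℝ ℝ + b • ContinuousLinearMap.snd ℝ ℝ ℝ

@[simp]
lemma dual2_apply (a b : ℝ) (v : ℝ × ℝ) : dual2 a b v = a * v.1 + b * v.2 := rfl

lemma hessian2_eq_of_hasFDerivAt {f : ℝ × ℝ → ℝ} {p : ℝ × ℝ} {g : Fin 2 → ℝ × ℝ → ℝ}
    {L : Fin 2 → ℝ × ℝ →L[ℝ] ℝ}
    (hf : ∀ b, (fun q => fderiv ℝ f q (basis2 b)) =ᶠ[𝓝 p] g b)
    (hg : ∀ b, HasFDerivAt (g b) (L b) p) :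
    hessian2 f p = Matrix.of fun a b => L b (basis2 a) := by
  ext a b
  simp only [hessian2, Matrix.of_apply, (hf b).fderiv_eq, (hg b).fderiv]

lemma cos_avg_mem_Ioo {a b : ℝ} (h : cos a ≠ cos b) :
    (cos a + cos b) / 2 ∈ Set.Ioo (-1) 1 := by
  have := neg_one_le_cos a; have := neg_one_le_cos b
  have := cos_le_one a; have := cos_le_one b
  constructor
  · refine lt_of_le_of_ne (by linarith) fun he => h ?_; linarith
  · refine lt_of_le_of_ne (by linarith) fun he => h ?_; linarith

lemma cos_rwPhase2 (p : ℝ × ℝ) : cos (rwPhase2 p) = (cos p.1 + cos p.2) / 2 :=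
  cos_arccos (by linarith [neg_one_le_cos p.1, neg_one_le_cos p.2])
    (by linarith [cos_le_one p.1, cos_le_one p.2])

lemma sin_rwPhase2_pos (p : ℝ × ℝ) (h : cos p.1 ≠ cos p.2) : 0 < sin (rwPhase2 p) :=
  have hu := cos_avg_mem_Ioo h
  sin_pos_of_pos_of_lt_pi (arccos_pos.2 hu.2) (arccos_lt_pi.2 hu.1)

lemma hasFDerivAt_cos_avg (p : ℝ × ℝ) :
    HasFDerivAt (fun q : ℝ × ℝ => (cos q.1 + cos q.2) / 2)
      (dual2 (-sin p.1 / 2) (-sin p.2 / 2)) p := by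
  have h₁ := (hasFDerivAt_fst (𝕜 := ℝ) (p := p)).cos
  have h₂ := (hasFDerivAt_snd (𝕜 := ℝ) (p := p)).cos
  simp_rw [div_eq_mul_inv]
  refine ((h₁.fun_add h₂).mul_const 2⁻¹).congr_fderiv ?_
  ext <;> simp <;> ring

lemma hasFDerivAt_rwPhase2 (p : ℝ × ℝ) (h : cos p.1 ≠ cos p.2) :
    HasFDerivAt rwPhase2
      (dual2 (sin p.1 / (2 * sin (rwPhase2 p))) (sin p.2 / (2 * sin (rwPhase2 p)))) p := by
  have hu := cos_avg_mem_Ioo h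
  have harccos :=
    (hasDerivAt_arccos hu.1.ne' hu.2.ne).comp_hasFDerivAt p (hasFDerivAt_cos_avg p)
  refine harccos.congr_fderiv ?_
  ext <;> simp [rwPhase2, sin_arccos] <;> ring

lemma hasFDerivAt_div_two_sin_rwPhase2 {s : ℝ × ℝ → ℝ} {p : ℝ × ℝ} {a b : ℝ}
    (hs : HasFDerivAt s (dual2 a b) p) (h : cos p.1 ≠ cos p.2) :
    HasFDerivAt (fun q => s q / (2 * sin (rwPhase2 q)))
      (dual2 (a / (2 * sin (rwPhase2 p)) -
          cos (rwPhase2 p) * s p * sin p.1 / (4 * sin (rwPhase2 p) ^ 3))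
        (b / (2 * sin (rwPhase2 p)) -
          cos (rwPhase2 p) * s p * sin p.2 / (4 * sin (rwPhase2 p) ^ 3))) p := by
  have hw := (sin_rwPhase2_pos p h).ne'
  have hinv := (hasDerivAt_inv (by positivity : 2 * sin (rwPhase2 p) ≠ 0)).comp_hasFDerivAt p
    (((hasFDerivAt_rwPhase2 p h).sin).const_mul 2)
  simp_rw [div_eq_mul_inv]
  refine (hs.mul hinv).congr_fderiv ?_
  ext <;> simp <;> field_simp <;> ring

lemma hessian2_rwPhase2 (p : ℝ × ℝ) (h : cos p.1 ≠ cos p.2) :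
    let u := cos (rwPhase2 p)
    let w := sin (rwPhase2 p)
    hessian2 rwPhase2 p =
      !![cos p.1 / (2 * w) - u * sin p.1 ^ 2 / (4 * w ^ 3),
          -(u * sin p.1 * sin p.2) / (4 * w ^ 3);
        -(u * sin p.1 * sin p.2) / (4 * w ^ 3),
          cos p.2 / (2 * w) - u * sin p.2 ^ 2 / (4 * w ^ 3)] := by
  have hnhds : ∀ᶠ q in 𝓝 p, cos q.1 ≠ cos q.2 :=
    (isOpen_ne_fun (by fun_prop) (by fun_prop)).mem_nhds h
  have hpartial : ∀ b, (fun q => fderiv ℝ rwPhase2 q (basis2 b)) =ᶠ[𝓝 p]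
      ![fun q => sin q.1 / (2 * sin (rwPhase2 q)),
        fun q => sin q.2 / (2 * sin (rwPhase2 q))] b := by
    intro b
    filter_upwards [hnhds] with q hq
    fin_cases b <;> simp [(hasFDerivAt_rwPhase2 q hq).fderiv, basis2]
  have hsin₁ : HasFDerivAt (fun q : ℝ × ℝ => sin q.1) (dual2 (cos p.1) 0) p := by
    refine (hasFDerivAt_fst (𝕜 := ℝ) (p := p)).sin.congr_fderiv ?_
    ext <;> simp
  have hsin₂ : HasFDerivAt (fun q : ℝ × ℝ => sin q.2) (dual2 0 (cos p.2)) p := by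
    refine (hasFDerivAt_snd (𝕜 := ℝ) (p := p)).sin.congr_fderiv ?_
    ext <;> simp
  rw [hessian2_eq_of_hasFDerivAt hpartial (L := ![_, _]) (Fin.forall_fin_two.2
    ⟨hasFDerivAt_div_two_sin_rwPhase2 hsin₁ h, hasFDerivAt_div_two_sin_rwPhase2 hsin₂ h⟩)]
  ext i j
  fin_cases i <;> fin_cases j <;> simp [basis2] <;> ring

lemma sin_sq_rwPhase2 (p : ℝ × ℝ) :
    sin (rwPhase2 p) ^ 2 = 1 - ((cos p.1 + cos p.2) / 2) ^ 2 := by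
  rw [sin_sq, cos_rwPhase2]

lemma det_hessian2_rwPhase2 (p : ℝ × ℝ) (h : cos p.1 ≠ cos p.2) :
    (hessian2 rwPhase2 p).det = -(cos p.1 - cos p.2) ^ 2 / (16 * sin (rwPhase2 p) ^ 4) := by
  have hw := (sin_rwPhase2_pos p h).ne'
  rw [hessian2_rwPhase2 p h, Matrix.det_fin_two_of, cos_rwPhase2]
  field_simp
  rw [sin_sq p.1, sin_sq p.2, sin_sq_rwPhase2]
  ring

lemma sq_add_sq_grad_rwPhase2 (p : ℝ × ℝ) (h : cos p.1 ≠ cos p.2) :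
    (sin p.1 / (2 * sin (rwPhase2 p))) ^ 2 + (sin p.2 / (2 * sin (rwPhase2 p))) ^ 2 =
      1 / 2 - (cos p.1 - cos p.2) ^ 2 / (8 * sin (rwPhase2 p) ^ 2) := by
  have hw := (sin_rwPhase2_pos p h).ne'
  field_simp
  rw [sin_sq p.1, sin_sq p.2, sin_sq_rwPhase2]
  ring

lemma one_sub_sq_mul_one_sub_sq_grad_rwPhase2 (p : ℝ × ℝ) (h : cos p.1 ≠ cos p.2) :
    (1 - (sin p.1 / (2 * sin (rwPhase2 p)) + sin p.2 / (2 * sin (rwPhase2 p))) ^ 2) *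
        (1 - (sin p.1 / (2 * sin (rwPhase2 p)) - sin p.2 / (2 * sin (rwPhase2 p))) ^ 2) =
      (cos p.1 - cos p.2) ^ 2 / (4 * sin (rwPhase2 p) ^ 4) := by
  have hw := (sin_rwPhase2_pos p h).ne'
  have hexpand (a s t : ℝ) :
      (a - (s + t) ^ 2) * (a - (s - t) ^ 2) = (a - s ^ 2 - t ^ 2) ^ 2 - 4 * s ^ 2 * t ^ 2 := by
    ring
  field_simp
  rw [hexpand, sin_sq p.1, sin_sq p.2, sin_sq_rwPhase2]
  ring

/-- For `cos k ≠ cos l`, with `φ = arccos((cos k + cos l)/2)`,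
`x = sin k/(2 sin φ)` and `y = sin l/(2 sin φ)`: one has `x² + y² < 1/2` and
`det Hess φ (k,l) = −(1/4)(1 − (x+y)²)(1 − (x−y)²)
  = −(1/4)(x+y−1)(x+y+1)(x−y+1)(x−y−1) < 0`
(the identity underlying the limit density
`ρ₂(x,y) = 2·1_{x²+y²≤1/2} / (π²(x+y−1)(x+y+1)(x−y+1)(x−y−1))` of the Grover walk on `ℤ²`). -/
theorem rwPhase2_hessian_det (k l : ℝ) (h : Real.cos k ≠ Real.cos l) :
    let φ := rwPhase2 (k, l)
    let x := Real.sin k / (2 * Real.sin φ)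
    let y := Real.sin l / (2 * Real.sin φ)
    x ^ 2 + y ^ 2 < 1 / 2 ∧
    (hessian2 rwPhase2 (k, l)).det
      = -(1 / 4) * (1 - (x + y) ^ 2) * (1 - (x - y) ^ 2) ∧
    (hessian2 rwPhase2 (k, l)).det
      = -(1 / 4) * (x + y - 1) * (x + y + 1) * (x - y + 1) * (x - y - 1) ∧
    (hessian2 rwPhase2 (k, l)).det < 0 := by
  intro φ x y
  have hw : 0 < sin φ := sin_rwPhase2_pos (k, l) h
  have hdiff : 0 < (cos k - cos l) ^ 2 := by
    have := sub_ne_zero.2 h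
    positivity
  have hdet := det_hessian2_rwPhase2 (k, l) h
  have hfactor := one_sub_sq_mul_one_sub_sq_grad_rwPhase2 (k, l) h
  refine ⟨?_, ?_, ?_, ?_⟩
  · have : 0 < (cos k - cos l) ^ 2 / (8 * sin φ ^ 2) := by positivity
    linarith [sq_add_sq_grad_rwPhase2 (k, l) h]
  · linear_combination hdet + (1 / 4) * hfactor
  · linear_combination hdet + (1 / 4) * hfactor
  · rw [hdet]
    exact div_neg_of_neg_of_pos (neg_neg_of_pos hdiff) (by positivity)
end
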